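/- Let α, β, γ be positive real numbers with 2√2 · γ < 1. Then there exist positive real numbers ε₁, ε₂, ε₃, λ, μ such that: (i) α²/ε₁ + γ²/ε₃ < 1 − ε₃ (in particular ε₃ < 1); (ii) λ − ε₁ = 1 − ε₃; (iii) μ > ε₂; (iv) (β²/ε₃) · (1 − ε₃) = (μ − ε₂) · (α²/ε₁ + γ²/ε₃); and (v) the ratio ρ := (α²/ε₁ + γ²/ε₃)/(1 − ε₃) satisfies 0 < ρ < 1. -/

import Mathlib

/-- Parameter choice making the exponentially weighted Picard iteration for the
BSDE in Theorem 6.2 of the paper a contraction: given Lipschitz constants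
`α, β, γ > 0` with `2√2 · γ < 1`, there exist `ε₁, ε₂, ε₃, λ, μ > 0` with
(i) `α²/ε₁ + γ²/ε₃ < 1 − ε₃` (in particular `ε₃ < 1`), (ii) `λ − ε₁ = 1 − ε₃`,
(iii) `μ > ε₂`, (iv) `(β²/ε₃)(1 − ε₃) = (μ − ε₂)(α²/ε₁ + γ²/ε₃)`, and
(v) `0 < ρ < 1` for `ρ = (α²/ε₁ + γ²/ε₃)/(1 − ε₃)`. -/
theorem stmt3
    (α β γ : ℝ) (hα : 0 < α) (hβ : 0 < β) (hγ : 0 < γ)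
    (hsmall : 2 * Real.sqrt 2 * γ < 1) :
    ∃ ε₁ ε₂ ε₃ lam mu : ℝ,
      0 < ε₁ ∧ 0 < ε₂ ∧ 0 < ε₃ ∧ 0 < lam ∧ 0 < mu ∧
      (α ^ 2 / ε₁ + γ ^ 2 / ε₃ < 1 - ε₃ ∧ ε₃ < 1) ∧
      lam - ε₁ = 1 - ε₃ ∧
      ε₂ < mu ∧
      (β ^ 2 / ε₃) * (1 - ε₃) = (mu - ε₂) * (α ^ 2 / ε₁ + γ ^ 2 / ε₃) ∧
      (0 < (α ^ 2 / ε₁ + γ ^ 2 / ε₃) / (1 - ε₃) ∧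
        (α ^ 2 / ε₁ + γ ^ 2 / ε₃) / (1 - ε₃) < 1) := by
  have hsq : γ ^ 2 < 1 / 8 := by
    have h1 : (2 * Real.sqrt 2 * γ) ^ 2 < 1 := by
      have hnn : 0 ≤ 2 * Real.sqrt 2 * γ := by positivity
      nlinarith
    have h2 : (Real.sqrt 2) ^ 2 = 2 := Real.sq_sqrt (by norm_num)
    nlinarith
  have hc : (0:ℝ) < 1 / 4 - γ ^ 2 := by nlinarith
  have hα2 : (0:ℝ) < α ^ 2 := by positivity
  set ε₁ : ℝ := α ^ 2 / (1 / 4 - γ ^ 2) with hε₁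
  have hε₁pos : 0 < ε₁ := by positivity
  have hkey : α ^ 2 / ε₁ = 1 / 4 - γ ^ 2 := by
    rw [hε₁]; field_simp
  have hS : α ^ 2 / ε₁ + γ ^ 2 / (1/2 : ℝ) = 1 / 4 + γ ^ 2 := by
    rw [hkey]; ring
  have hSpos : (0:ℝ) < 1 / 4 + γ ^ 2 := by positivity
  refine ⟨ε₁, 1, 1/2, ε₁ + 1/2, 1 + β ^ 2 / (1 / 4 + γ ^ 2), hε₁pos, one_pos,
    by norm_num, by linarith, by positivity, ⟨?_, by norm_num⟩, by ring, ?_, ?_, ?_, ?_⟩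
  · rw [hS]; nlinarith
  · have : 0 < β ^ 2 / (1 / 4 + γ ^ 2) := by positivity
    linarith
  · rw [hS]
    field_simp
    ring
  · rw [hS]; positivity
  · rw [hS]
    rw [div_lt_one (by norm_num)]
    nlinarith
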